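/- Let q with |q| < 1 and complex a, x with |x| < 1. Then ∑_{k=0}^{∞} (a; q)_k x^k = ∑_{k=0}^{∞} q^{k(k-1)/2} (−a x)^k / (x; q)_{k+1}, provided x ≠ q^{-m} for all m ≤ 0 so that the denominators are nonzero. -/

import Mathlib

open Finset Complex

/-- finite q-Pochhammer symbol `(x; q)_n` -/
noncomputable def qp (q x : ℂ) (n : ℕ) : ℂ := ∏ j ∈ Finset.range n, (1 - x * q ^ j)

/-- infinite q-Pochhammer symbol `(x; q)_∞` -/
noncomputable def qpi (q x : ℂ) : ℂ := ∏' j : ℕ, (1 - x * q ^ j)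

/-!
Both sides, as functions `h` of `x` on the unit disc, satisfy the q-difference equation
`(1 - x) h(x) = 1 - a x h(q x)`. Their difference `D` therefore satisfies
`D(x) = -a x / (1 - x) · D(q x)`, and iterating,
`D(x) = ∏_{j<n} (-a x q^j / (1 - x q^j)) · D(x q^n)`. The product is `O(|q|^(n(n-1)/2) C^n)`,
while `D` stays bounded on the disc of radius `|x|`, so `D(x) = 0`.
-/

open Filter Topology

section NormedField

variable {𝕜 : Type*} [NormedField 𝕜]

theorem summable_pow_triangle_mul_pow [CompleteSpace 𝕜] {q : 𝕜} (hq : ‖q‖ < 1) (z : 𝕜) :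
    Summable fun k : ℕ => q ^ (k * (k - 1) / 2) * z ^ k := by
  have hsmall : Tendsto (fun k : ℕ => ‖z‖ * ‖q‖ ^ k) atTop (𝓝 0) := by
    simpa using (tendsto_pow_atTop_nhds_zero_of_lt_one (norm_nonneg q) hq).const_mul ‖z‖
  refine summable_of_ratio_norm_eventually_le (r := 1 / 2) (by norm_num) ?_
  filter_upwards [hsmall.eventually (ge_mem_nhds (by norm_num : (0 : ℝ) < 1 / 2))] with k hk
  calc ‖q ^ ((k + 1) * (k + 1 - 1) / 2) * z ^ (k + 1)‖
      = ‖z‖ * ‖q‖ ^ k * ‖q ^ (k * (k - 1) / 2) * z ^ k‖ := by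
        rw [Nat.triangle_succ]; simp only [norm_mul, norm_pow, pow_add, pow_succ]; ring
    _ ≤ 1 / 2 * ‖q ^ (k * (k - 1) / 2) * z ^ k‖ := by gcongr

theorem tendsto_prod_range_zero_of_norm_le {c : ℕ → 𝕜} {K r : ℝ} (hr0 : 0 ≤ r) (hr : r < 1)
    (hc : ∀ j, ‖c j‖ ≤ K * r ^ j) :
    Tendsto (fun n => ∏ j ∈ range n, c j) atTop (𝓝 0) := by
  have hr' : ‖r‖ < 1 := by rwa [Real.norm_of_nonneg hr0]
  refine squeeze_zero_norm (fun n => ?_) (summable_pow_triangle_mul_pow hr' K).tendsto_atTop_zero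
  calc ‖∏ j ∈ range n, c j‖ = ∏ j ∈ range n, ‖c j‖ := norm_prod _ _
    _ ≤ ∏ j ∈ range n, K * r ^ j := prod_le_prod (fun _ _ => norm_nonneg _) fun j _ => hc j
    _ = r ^ (n * (n - 1) / 2) * K ^ n := by
        rw [prod_mul_distrib, prod_const, card_range, prod_pow_eq_pow_sum, sum_range_id, mul_comm]

theorem eq_zero_of_forall_eq_mul_succ {u c : ℕ → 𝕜} {B : ℝ} (hu : ∀ n, ‖u n‖ ≤ B)
    (hrec : ∀ n, u n = c n * u (n + 1))
    (hc : Tendsto (fun n => ∏ j ∈ range n, c j) atTop (𝓝 0)) : u 0 = 0 := by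
  have hiter : ∀ n, u 0 = (∏ j ∈ range n, c j) * u n := by
    intro n
    induction n with
    | zero => simp
    | succ n ih => rw [ih, hrec n, prod_range_succ, mul_assoc]
  have hlim : Tendsto (fun n => (∏ j ∈ range n, c j) * u n) atTop (𝓝 0) :=
    hc.zero_mul_isBoundedUnder_le (isBoundedUnder_of ⟨B, hu⟩)
  exact tendsto_nhds_unique (tendsto_const_nhds.congr hiter) hlim

end NormedField

theorem qp_succ (q y : ℂ) (k : ℕ) : qp q y (k + 1) = qp q y k * (1 - y * q ^ k) :=
  prod_range_succ _ _

theorem qp_succ' (q y : ℂ) (k : ℕ) : qp q y (k + 1) = (1 - y) * qp q (q * y) k := by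
  simp only [qp, prod_range_succ', pow_zero, mul_one, pow_succ]
  rw [mul_comm]
  congr 1
  exact prod_congr rfl fun j _ => by ring

section Pochhammer

variable {q : ℂ}

theorem norm_mul_pow_le (hq : ‖q‖ ≤ 1) (y : ℂ) (j : ℕ) : ‖y * q ^ j‖ ≤ ‖y‖ := by
  rw [norm_mul, norm_pow]
  exact mul_le_of_le_one_right (norm_nonneg y) (pow_le_one₀ (norm_nonneg q) hq)

theorem one_sub_norm_le_norm_one_sub_mul_pow (hq : ‖q‖ ≤ 1) (y : ℂ) (j : ℕ) :
    1 - ‖y‖ ≤ ‖1 - y * q ^ j‖ := by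
  linarith [norm_mul_pow_le hq y j, norm_one (α := ℂ) ▸ norm_sub_norm_le (1 : ℂ) (y * q ^ j)]

theorem norm_qp_le (a : ℂ) (hq : ‖q‖ < 1) (k : ℕ) :
    ‖qp q a k‖ ≤ Real.exp (‖a‖ / (1 - ‖q‖)) := by
  calc ‖qp q a k‖ = ∏ j ∈ range k, ‖1 - a * q ^ j‖ := norm_prod _ _
    _ ≤ ∏ j ∈ range k, Real.exp (‖a‖ * ‖q‖ ^ j) := by
        refine prod_le_prod (fun _ _ => norm_nonneg _) fun j _ => ?_
        calc ‖1 - a * q ^ j‖ ≤ 1 + ‖a‖ * ‖q‖ ^ j := by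
              simpa using norm_sub_le (1 : ℂ) (a * q ^ j)
          _ ≤ Real.exp (‖a‖ * ‖q‖ ^ j) := by linarith [Real.add_one_le_exp (‖a‖ * ‖q‖ ^ j)]
    _ = Real.exp (‖a‖ * ∑ j ∈ range k, ‖q‖ ^ j) := by rw [← Real.exp_sum, mul_sum]
    _ ≤ Real.exp (‖a‖ / (1 - ‖q‖)) := by
        have := geom_sum_Ico_le_of_lt_one (m := 0) (n := k) (norm_nonneg q) hq
        rw [← range_eq_Ico, pow_zero] at this
        rw [div_eq_mul_one_div]
        gcongr

theorem pow_le_norm_qp (hq : ‖q‖ ≤ 1) {y : ℂ} (hy : ‖y‖ ≤ 1) (k : ℕ) :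
    (1 - ‖y‖) ^ k ≤ ‖qp q y k‖ := by
  rw [qp, norm_prod, show (1 - ‖y‖) ^ k = ∏ _j ∈ range k, (1 - ‖y‖) by simp]
  exact prod_le_prod (fun _ _ => sub_nonneg.2 hy) fun j _ =>
    one_sub_norm_le_norm_one_sub_mul_pow hq y j

theorem qp_ne_zero (hq : ‖q‖ ≤ 1) {y : ℂ} (hy : ‖y‖ < 1) (k : ℕ) : qp q y k ≠ 0 :=
  norm_pos_iff.1 <| (pow_pos (sub_pos.2 hy) k).trans_le (pow_le_norm_qp hq hy.le k)

end Pochhammer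

noncomputable def pochhammerSeries (q a y : ℂ) : ℂ := ∑' k : ℕ, qp q a k * y ^ k

noncomputable def jacksonSeries (q a y : ℂ) : ℂ :=
  ∑' k : ℕ, q ^ (k * (k - 1) / 2) * (-a * y) ^ k / qp q y (k + 1)

section Series

variable {q : ℂ} (a : ℂ)

theorem norm_pochhammerSeries_term_le (hq : ‖q‖ < 1) {y : ℂ} {s : ℝ} (hy : ‖y‖ ≤ s) (k : ℕ) :
    ‖qp q a k * y ^ k‖ ≤ Real.exp (‖a‖ / (1 - ‖q‖)) * s ^ k := by
  rw [norm_mul, norm_pow]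
  gcongr
  exact norm_qp_le a hq k

theorem summable_pochhammerSeries (hq : ‖q‖ < 1) {y : ℂ} (hy : ‖y‖ < 1) :
    Summable fun k : ℕ => qp q a k * y ^ k :=
  .of_norm_bounded ((summable_geometric_of_lt_one (norm_nonneg y) hy).mul_left _)
    (norm_pochhammerSeries_term_le a hq le_rfl)

theorem norm_pochhammerSeries_le (hq : ‖q‖ < 1) {y : ℂ} {s : ℝ} (hy : ‖y‖ ≤ s) (hs : s < 1) :
    ‖pochhammerSeries q a y‖ ≤ Real.exp (‖a‖ / (1 - ‖q‖)) * (1 - s)⁻¹ :=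
  tsum_of_norm_bounded ((hasSum_geometric_of_lt_one ((norm_nonneg y).trans hy) hs).mul_left _)
    (norm_pochhammerSeries_term_le a hq hy)

theorem one_sub_mul_pochhammerSeries (hq : ‖q‖ < 1) {y : ℂ} (hy : ‖y‖ < 1) :
    (1 - y) * pochhammerSeries q a y = 1 - a * y * pochhammerSeries q a (q * y) := by
  have hqy : ‖q * y‖ < 1 := by
    rw [norm_mul]; exact (mul_le_of_le_one_left (norm_nonneg y) hq.le).trans_lt hy
  have hS := summable_pochhammerSeries a hq hy
  have hS' := summable_pochhammerSeries a hq hqy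
  have hshift : ∑' k : ℕ, qp q a (k + 1) * y ^ (k + 1)
      = y * pochhammerSeries q a y - a * y * pochhammerSeries q a (q * y) := by
    rw [pochhammerSeries, pochhammerSeries, ← tsum_mul_left, ← tsum_mul_left,
      ← (hS.mul_left y).tsum_sub (hS'.mul_left (a * y))]
    exact tsum_congr fun k => by rw [qp_succ]; ring
  have hsplit : pochhammerSeries q a y = 1 + ∑' k : ℕ, qp q a (k + 1) * y ^ (k + 1) := by
    rw [pochhammerSeries, hS.tsum_eq_zero_add]
    simp [qp]
  linear_combination hsplit + hshift

theorem norm_jacksonSeries_term_le (hq : ‖q‖ ≤ 1) {y : ℂ} {s : ℝ} (hy : ‖y‖ ≤ s) (hs : s < 1)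
    (k : ℕ) :
    ‖q ^ (k * (k - 1) / 2) * (-a * y) ^ k / qp q y (k + 1)‖
      ≤ (1 - s)⁻¹ * (‖q‖ ^ (k * (k - 1) / 2) * (‖a‖ * s / (1 - s)) ^ k) := by
  have hs0 : 0 ≤ s := (norm_nonneg y).trans hy
  have hs' : 0 < 1 - s := sub_pos.2 hs
  have hden : (1 - s) ^ (k + 1) ≤ ‖qp q y (k + 1)‖ :=
    (pow_le_pow_left₀ hs'.le (by linarith) _).trans (pow_le_norm_qp hq (hy.trans hs.le) _)
  calc ‖q ^ (k * (k - 1) / 2) * (-a * y) ^ k / qp q y (k + 1)‖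
      = ‖q‖ ^ (k * (k - 1) / 2) * (‖a‖ * ‖y‖) ^ k / ‖qp q y (k + 1)‖ := by
        simp
    _ ≤ ‖q‖ ^ (k * (k - 1) / 2) * (‖a‖ * s) ^ k / (1 - s) ^ (k + 1) := by gcongr
    _ = (1 - s)⁻¹ * (‖q‖ ^ (k * (k - 1) / 2) * (‖a‖ * s / (1 - s)) ^ k) := by
        rw [div_pow, pow_succ]; field_simp

theorem summable_jacksonSeries (hq : ‖q‖ < 1) {y : ℂ} (hy : ‖y‖ < 1) :
    Summable fun k : ℕ => q ^ (k * (k - 1) / 2) * (-a * y) ^ k / qp q y (k + 1) :=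
  .of_norm_bounded
    ((summable_pow_triangle_mul_pow (q := ‖q‖) (by rwa [norm_norm]) _).mul_left (1 - ‖y‖)⁻¹)
    (norm_jacksonSeries_term_le a hq.le le_rfl hy)

theorem norm_jacksonSeries_le (hq : ‖q‖ < 1) {y : ℂ} {s : ℝ} (hy : ‖y‖ ≤ s) (hs : s < 1) :
    ‖jacksonSeries q a y‖
      ≤ (1 - s)⁻¹ * ∑' k : ℕ, ‖q‖ ^ (k * (k - 1) / 2) * (‖a‖ * s / (1 - s)) ^ k := by
  rw [← tsum_mul_left]
  exact tsum_of_norm_bounded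
    ((summable_pow_triangle_mul_pow (q := ‖q‖) (by rwa [norm_norm]) _).mul_left (1 - s)⁻¹).hasSum
    (norm_jacksonSeries_term_le a hq.le hy hs)

theorem one_sub_mul_jacksonSeries (hq : ‖q‖ < 1) {y : ℂ} (hy : ‖y‖ < 1) :
    (1 - y) * jacksonSeries q a y = 1 - a * y * jacksonSeries q a (q * y) := by
  have hqy : ‖q * y‖ < 1 := by
    rw [norm_mul]; exact (mul_le_of_le_one_left (norm_nonneg y) hq.le).trans_lt hy
  have hy1 : 1 - y ≠ 0 := sub_ne_zero.2 fun h => by simp [← h] at hy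
  have hcancel : ∀ k : ℕ, (1 - y) * (q ^ (k * (k - 1) / 2) * (-a * y) ^ k / qp q y (k + 1))
      = q ^ (k * (k - 1) / 2) * (-a * y) ^ k / qp q (q * y) k := fun k => by
    have := qp_ne_zero hq.le hqy k
    rw [qp_succ']; field_simp
  have hS : Summable fun k : ℕ => q ^ (k * (k - 1) / 2) * (-a * y) ^ k / qp q (q * y) k :=
    ((summable_jacksonSeries a hq hy).mul_left (1 - y)).congr hcancel
  have hshift : ∀ k : ℕ,
      q ^ ((k + 1) * (k + 1 - 1) / 2) * (-a * y) ^ (k + 1) / qp q (q * y) (k + 1)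
        = -(a * y) * (q ^ (k * (k - 1) / 2) * (-a * (q * y)) ^ k / qp q (q * y) (k + 1)) :=
    fun k => by rw [Nat.triangle_succ, pow_add]; ring
  calc (1 - y) * jacksonSeries q a y
      = ∑' k : ℕ, q ^ (k * (k - 1) / 2) * (-a * y) ^ k / qp q (q * y) k := by
        rw [jacksonSeries, ← tsum_mul_left]; exact tsum_congr hcancel
    _ = 1 - a * y * jacksonSeries q a (q * y) := by
        rw [hS.tsum_eq_zero_add, tsum_congr hshift, tsum_mul_left, jacksonSeries]
        simp [qp]
        ring

theorem pochhammerSeries_sub_jacksonSeries (hq : ‖q‖ < 1) {y : ℂ} (hy : ‖y‖ < 1) :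
    pochhammerSeries q a y - jacksonSeries q a y
      = -a * y / (1 - y) * (pochhammerSeries q a (q * y) - jacksonSeries q a (q * y)) := by
  have hy1 : 1 - y ≠ 0 := sub_ne_zero.2 fun h => by simp [← h] at hy
  rw [div_mul_eq_mul_div, eq_div_iff hy1]
  linear_combination one_sub_mul_pochhammerSeries a hq hy - one_sub_mul_jacksonSeries a hq hy

end Series

theorem stmt_7_general (q a x : ℂ) (hq : ‖q‖ < 1) (hx : ‖x‖ < 1) :
    ∑' k : ℕ, qp q a k * x ^ k =
      ∑' k : ℕ, q ^ (k * (k - 1) / 2) * (-a * x) ^ k / qp q x (k + 1) := by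
  have hxq : ∀ n : ℕ, ‖x * q ^ n‖ ≤ ‖x‖ := norm_mul_pow_le hq.le x
  set u : ℕ → ℂ := fun n => pochhammerSeries q a (x * q ^ n) - jacksonSeries q a (x * q ^ n)
  have hrec : ∀ n, u n = -a * (x * q ^ n) / (1 - x * q ^ n) * u (n + 1) := fun n => by
    simpa only [u, pow_succ, mul_comm q, mul_assoc] using
      pochhammerSeries_sub_jacksonSeries a hq ((hxq n).trans_lt hx)
  have hbdd : ∀ n, ‖u n‖ ≤ Real.exp (‖a‖ / (1 - ‖q‖)) * (1 - ‖x‖)⁻¹ + (1 - ‖x‖)⁻¹ *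
      ∑' k : ℕ, ‖q‖ ^ (k * (k - 1) / 2) * (‖a‖ * ‖x‖ / (1 - ‖x‖)) ^ k := fun n =>
    (norm_sub_le _ _).trans (add_le_add (norm_pochhammerSeries_le a hq (hxq n) hx)
      (norm_jacksonSeries_le a hq (hxq n) hx))
  have hc : ∀ j : ℕ, ‖-a * (x * q ^ j) / (1 - x * q ^ j)‖ ≤ ‖a‖ * ‖x‖ / (1 - ‖x‖) * ‖q‖ ^ j :=
    fun j => by
      have hden := one_sub_norm_le_norm_one_sub_mul_pow hq.le x j
      calc ‖-a * (x * q ^ j) / (1 - x * q ^ j)‖ = ‖a‖ * ‖x‖ * ‖q‖ ^ j / ‖1 - x * q ^ j‖ := by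
            rw [norm_div, norm_mul, norm_neg, norm_mul, norm_pow, mul_assoc]
        _ ≤ ‖a‖ * ‖x‖ * ‖q‖ ^ j / (1 - ‖x‖) := by gcongr
        _ = ‖a‖ * ‖x‖ / (1 - ‖x‖) * ‖q‖ ^ j := by ring
  have hu0 := eq_zero_of_forall_eq_mul_succ hbdd hrec
    (tendsto_prod_range_zero_of_norm_le (norm_nonneg q) hq hc)
  simpa only [u, pow_zero, mul_one, sub_eq_zero, pochhammerSeries, jacksonSeries] using hu0

theorem stmt_7 (q a x : ℂ) (hq : ‖q‖ < 1) (hx : ‖x‖ < 1)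
    (hxp : ∀ m : ℕ, x * q ^ m ≠ 1) :
    ∑' k : ℕ, qp q a k * x ^ k =
      ∑' k : ℕ, q ^ (k * (k - 1) / 2) * (-a * x) ^ k / qp q x (k + 1) :=
  stmt_7_general q a x hq hx
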